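/- arXiv:2502.10192 — 5 statements merged into one kernel-verified Lean document; each statement's English description precedes it below -/
import Mathlib

section
/- Let n be even, and let A, B, C : F_2^n → F_2 be Boolean functions. Define f : F_2^n × F_2 × F_2 → F_2 by f(x, x_{n+1}, x_{n+2}) = AB ⊕ AC ⊕ BC ⊕ x_{n+1}x_{n+2} ⊕ (A⊕B)x_{n+1} ⊕ (A⊕C)x_{n+2} (all functions evaluated at x). Then for all u ∈ F_2^n: W_f(u,0,0) = 2·W_A(u), W_f(u,0,1) = 2·W_B(u), W_f(u,1,0) = 2·W_C(u), and W_f(u,1,1) = −2·W_{A⊕B⊕C}(u). -/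
open Finset

/-- Walsh–Hadamard transform of a Boolean function on `F_2^n`. -/
def walsh {n : ℕ} (g : (Fin n → ZMod 2) → ZMod 2) (u : Fin n → ZMod 2) : ℤ :=
  ∑ x : Fin n → ZMod 2, (-1 : ℤ) ^ (g x + ∑ i, u i * x i).val

/-- Bentness: `|W_g(u)| = 2^(n/2)` for all `u`. -/
def IsBent {n : ℕ} (g : (Fin n → ZMod 2) → ZMod 2) : Prop :=
  ∀ u, |walsh g u| = 2 ^ (n / 2)

/-- Walsh transform of a Boolean function on `F_2^n × F_2 × F_2`. -/
def walsh2 {n : ℕ} (g : (Fin n → ZMod 2) → ZMod 2 → ZMod 2 → ZMod 2)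
    (u : Fin n → ZMod 2) (u1 u2 : ZMod 2) : ℤ :=
  ∑ x : Fin n → ZMod 2, ∑ x1 : ZMod 2, ∑ x2 : ZMod 2,
    (-1 : ℤ) ^ (g x x1 x2 + (∑ i, u i * x i) + u1 * x1 + u2 * x2).val

/-- Bentness on `n+2` variables (`n` even): `|W(u)| = 2^((n+2)/2) = 2^(n/2+1)`. -/
def IsBent2 {n : ℕ} (g : (Fin n → ZMod 2) → ZMod 2 → ZMod 2 → ZMod 2) : Prop :=
  ∀ u u1 u2, |walsh2 g u u1 u2| = 2 ^ (n / 2 + 1)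

/-- Walsh transform of a Boolean function on `F_2^n × F_2^4`. -/
def walsh4 {n : ℕ} (g : (Fin n → ZMod 2) → ZMod 2 → ZMod 2 → ZMod 2 → ZMod 2 → ZMod 2)
    (u : Fin n → ZMod 2) (u1 u2 u3 u4 : ZMod 2) : ℤ :=
  ∑ x : Fin n → ZMod 2, ∑ x1 : ZMod 2, ∑ x2 : ZMod 2, ∑ x3 : ZMod 2, ∑ x4 : ZMod 2,
    (-1 : ℤ) ^ (g x x1 x2 x3 x4 + (∑ i, u i * x i)
      + u1 * x1 + u2 * x2 + u3 * x3 + u4 * x4).val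

/-- Bentness on `n+4` variables (`n` even). -/
def IsBent4 {n : ℕ} (g : (Fin n → ZMod 2) → ZMod 2 → ZMod 2 → ZMod 2 → ZMod 2 → ZMod 2) : Prop :=
  ∀ u u1 u2 u3 u4, |walsh4 g u u1 u2 u3 u4| = 2 ^ (n / 2 + 2)

/-- Walsh transform of a Boolean function on `F_2^n × F_2^m`. -/
def walshP {n m : ℕ} (g : (Fin n → ZMod 2) → (Fin m → ZMod 2) → ZMod 2)
    (u : Fin n → ZMod 2) (v : Fin m → ZMod 2) : ℤ :=
  ∑ x : Fin n → ZMod 2, ∑ y : Fin m → ZMod 2,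
    (-1 : ℤ) ^ (g x y + (∑ i, u i * x i) + (∑ j, v j * y j)).val

/-!
For fixed `x`, the function is `x₁x₂` plus terms linear in `(x₁, x₂)`, and over `F₂²`
`∑ (-1)^(x₁x₂ + αx₁ + βx₂) = 2·(-1)^(αβ)`. With `α = A + B + u₁` and `β = A + C + u₂`, the
exponent `AB + AC + BC + αβ` reduces in `F₂` to `A`, `B`, `C` or `A + B + C + 1` according to
`(u₁, u₂)`.
-/

theorem neg_one_pow_val_add (p q : ZMod 2) :
    (-1 : ℤ) ^ (p + q).val = (-1) ^ p.val * (-1) ^ q.val := by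
  revert p q; decide

theorem neg_one_pow_val_add_one (p : ZMod 2) : (-1 : ℤ) ^ (p + 1).val = -(-1) ^ p.val := by
  revert p; decide

theorem sum_neg_one_pow_val_quadratic (a b : ZMod 2) :
    ∑ x1 : ZMod 2, ∑ x2 : ZMod 2, (-1 : ℤ) ^ (x1 * x2 + a * x1 + b * x2).val
      = 2 * (-1) ^ (a * b).val := by
  revert a b; decide

theorem walsh_congr {n : ℕ} {g h : (Fin n → ZMod 2) → ZMod 2} (hgh : ∀ x, g x = h x)
    (u : Fin n → ZMod 2) : walsh g u = walsh h u := by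
  simp only [walsh, hgh]

theorem walsh_add_one {n : ℕ} (g : (Fin n → ZMod 2) → ZMod 2) (u : Fin n → ZMod 2) :
    walsh (fun x => g x + 1) u = -walsh g u := by
  simp only [walsh, add_right_comm _ (1 : ZMod 2), neg_one_pow_val_add_one, sum_neg_distrib]

theorem walsh2_quadratic {n : ℕ} (q a b : (Fin n → ZMod 2) → ZMod 2) (u : Fin n → ZMod 2)
    (u1 u2 : ZMod 2) :
    walsh2 (fun x x1 x2 => q x + x1 * x2 + a x * x1 + b x * x2) u u1 u2
      = 2 * walsh (fun x => q x + (a x + u1) * (b x + u2)) u := by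
  simp only [walsh2, walsh, mul_sum]
  refine sum_congr rfl fun x _ => ?_
  have split : ∀ x1 x2 : ZMod 2,
      q x + x1 * x2 + a x * x1 + b x * x2 + ∑ i, u i * x i + u1 * x1 + u2 * x2
        = (q x + ∑ i, u i * x i) + (x1 * x2 + (a x + u1) * x1 + (b x + u2) * x2) :=
    fun _ _ => by ring
  simp only [split, neg_one_pow_val_add (q x + ∑ i, u i * x i), ← mul_sum,
    sum_neg_one_pow_val_quadratic]
  rw [add_right_comm, neg_one_pow_val_add (q x + ∑ i, u i * x i)]
  ring

theorem stmt5_general {n : ℕ} (A B C : (Fin n → ZMod 2) → ZMod 2)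
    (u : Fin n → ZMod 2) :
    walsh2 (fun x x1 x2 => A x * B x + A x * C x + B x * C x + x1 * x2 + (A x + B x) * x1 + (A x + C x) * x2) u 0 0 = 2 * walsh A u ∧
    walsh2 (fun x x1 x2 => A x * B x + A x * C x + B x * C x + x1 * x2 + (A x + B x) * x1 + (A x + C x) * x2) u 0 1 = 2 * walsh B u ∧
    walsh2 (fun x x1 x2 => A x * B x + A x * C x + B x * C x + x1 * x2 + (A x + B x) * x1 + (A x + C x) * x2) u 1 0 = 2 * walsh C u ∧
    walsh2 (fun x x1 x2 => A x * B x + A x * C x + B x * C x + x1 * x2 + (A x + B x) * x1 + (A x + C x) * x2) u 1 1 =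
      -2 * walsh (fun x => A x + B x + C x) u := by
  simp only [walsh2_quadratic (fun x => A x * B x + A x * C x + B x * C x)
    (fun x => A x + B x) (fun x => A x + C x) u]
  have exponent_eq : ∀ a b c : ZMod 2,
      (a * b + a * c + b * c + (a + b + 0) * (a + c + 0) = a) ∧
      (a * b + a * c + b * c + (a + b + 0) * (a + c + 1) = b) ∧
      (a * b + a * c + b * c + (a + b + 1) * (a + c + 0) = c) ∧
      (a * b + a * c + b * c + (a + b + 1) * (a + c + 1) = a + b + c + 1) := by
    decide
  refine ⟨?_, ?_, ?_, ?_⟩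
  · rw [walsh_congr fun x => (exponent_eq (A x) (B x) (C x)).1]
  · rw [walsh_congr fun x => (exponent_eq (A x) (B x) (C x)).2.1]
  · rw [walsh_congr fun x => (exponent_eq (A x) (B x) (C x)).2.2.1]
  · rw [walsh_congr fun x => (exponent_eq (A x) (B x) (C x)).2.2.2, walsh_add_one]
    ring

theorem stmt5 {n : ℕ} (hn : Even n) (A B C : (Fin n → ZMod 2) → ZMod 2)
    (u : Fin n → ZMod 2) :
    walsh2 (fun x x1 x2 => A x * B x + A x * C x + B x * C x + x1 * x2 + (A x + B x) * x1 + (A x + C x) * x2) u 0 0 = 2 * walsh A u ∧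
    walsh2 (fun x x1 x2 => A x * B x + A x * C x + B x * C x + x1 * x2 + (A x + B x) * x1 + (A x + C x) * x2) u 0 1 = 2 * walsh B u ∧
    walsh2 (fun x x1 x2 => A x * B x + A x * C x + B x * C x + x1 * x2 + (A x + B x) * x1 + (A x + C x) * x2) u 1 0 = 2 * walsh C u ∧
    walsh2 (fun x x1 x2 => A x * B x + A x * C x + B x * C x + x1 * x2 + (A x + B x) * x1 + (A x + C x) * x2) u 1 1 =
      -2 * walsh (fun x => A x + B x + C x) u :=
  stmt5_general A B C u
end

section
/- Let n be a positive even integer and A, B, C : F_2^n → F_2 Boolean functions. The function f on F_2^{n+2} defined by f(x, x_{n+1}, x_{n+2}) = A(x)B(x) ⊕ A(x)C(x) ⊕ B(x)C(x) ⊕ x_{n+1}x_{n+2} ⊕ (A(x)⊕B(x))x_{n+1} ⊕ (A(x)⊕C(x))x_{n+2} is bent if and only if A, B, C and A⊕B⊕C are all bent. -/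
/-!
The character sum of `x₁x₂ ⊕ a x₁ ⊕ b x₂` over `F_2^2` is `2 (-1)^{ab}`. Summing out the last two
coordinates of `f` this way and using `AB ⊕ AC ⊕ BC ⊕ (A ⊕ B)(A ⊕ C) = A`, each Walsh coefficient
of `f` at `(u, u₁, u₂)` is `±2` times the Walsh coefficient at `u` of `A ⊕ u₁(A ⊕ C) ⊕ u₂(A ⊕ B)`.
For `(u₁, u₂) = (0,0), (0,1), (1,0), (1,1)` this function is `A`, `B`, `C`, `A ⊕ B ⊕ C`.
-/

open Finset

lemma ZMod.forall_two {p : ZMod 2 → Prop} : (∀ a, p a) ↔ p 0 ∧ p 1 :=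
  ⟨fun h => ⟨h 0, h 1⟩, fun h a => by fin_cases a; exacts [h.1, h.2]⟩

lemma neg_one_pow_val_add_s6 (a b : ZMod 2) :
    (-1 : ℤ) ^ (a + b).val = (-1) ^ a.val * (-1) ^ b.val := by
  revert a b
  decide

lemma sum_sum_neg_one_pow_mul_add (e a b : ZMod 2) :
    ∑ x₁ : ZMod 2, ∑ x₂ : ZMod 2, (-1 : ℤ) ^ (e + x₁ * x₂ + a * x₁ + b * x₂).val
      = 2 * (-1 : ℤ) ^ (e + a * b).val := by
  revert e a b
  decide

lemma walsh2_mul_add_mul_add_mul {n : ℕ} (D P Q : (Fin n → ZMod 2) → ZMod 2)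
    (u : Fin n → ZMod 2) (u₁ u₂ : ZMod 2) :
    walsh2 (fun x x₁ x₂ => D x + x₁ * x₂ + P x * x₁ + Q x * x₂) u u₁ u₂
      = 2 * ∑ x, (-1 : ℤ) ^ (D x + ∑ i, u i * x i + (P x + u₁) * (Q x + u₂)).val := by
  rw [walsh2, mul_sum]
  refine sum_congr rfl fun x _ => ?_
  rw [← sum_sum_neg_one_pow_mul_add]
  refine sum_congr rfl fun x₁ _ => sum_congr rfl fun x₂ _ => ?_
  congr 2
  ring

def mixture {n : ℕ} (A B C : (Fin n → ZMod 2) → ZMod 2) (u₁ u₂ : ZMod 2) :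
    (Fin n → ZMod 2) → ZMod 2 :=
  fun x => A x + u₁ * (A x + C x) + u₂ * (A x + B x)

lemma walsh2_majority {n : ℕ} (A B C : (Fin n → ZMod 2) → ZMod 2)
    (u : Fin n → ZMod 2) (u₁ u₂ : ZMod 2) :
    walsh2 (fun x x₁ x₂ => A x * B x + A x * C x + B x * C x + x₁ * x₂ + (A x + B x) * x₁
        + (A x + C x) * x₂) u u₁ u₂
      = 2 * (-1) ^ (u₁ * u₂).val * walsh (mixture A B C u₁ u₂) u := by
  rw [walsh2_mul_add_mul_add_mul (fun x => A x * B x + A x * C x + B x * C x), walsh, mul_assoc]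
  congr 1
  rw [mul_sum]
  refine sum_congr rfl fun x _ => ?_
  rw [← neg_one_pow_val_add_s6, mixture]
  congr 2
  generalize A x = a, B x = b, C x = c, (∑ i, u i * x i : ZMod 2) = s
  revert a b c s u₁ u₂
  decide

lemma isBent2_majority_iff {n : ℕ} (A B C : (Fin n → ZMod 2) → ZMod 2) :
    IsBent2 (fun x x₁ x₂ => A x * B x + A x * C x + B x * C x + x₁ * x₂ + (A x + B x) * x₁
        + (A x + C x) * x₂) ↔ ∀ u₁ u₂, IsBent (mixture A B C u₁ u₂) := by
  simp only [IsBent2, IsBent, walsh2_majority, abs_mul, abs_pow, abs_neg, abs_one, one_pow,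
    mul_one, abs_two, pow_succ, mul_comm _ (2 : ℤ), mul_right_inj' (two_ne_zero' ℤ)]
  exact ⟨fun h u₁ u₂ u => h u u₁ u₂, fun h u u₁ u₂ => h u₁ u₂ u⟩

theorem stmt6_general {n : ℕ}
    (A B C : (Fin n → ZMod 2) → ZMod 2) :
    IsBent2 (fun x x1 x2 => A x * B x + A x * C x + B x * C x + x1 * x2 + (A x + B x) * x1 + (A x + C x) * x2) ↔
      (IsBent A ∧ IsBent B ∧ IsBent C ∧ IsBent (fun x => A x + B x + C x)) := by
  have h00 : mixture A B C 0 0 = A := by ext x; simp [mixture]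
  have h01 : mixture A B C 0 1 = B := by ext x; simp [mixture, CharTwo.add_cancel_left]
  have h10 : mixture A B C 1 0 = C := by ext x; simp [mixture, CharTwo.add_cancel_left]
  have h11 : mixture A B C 1 1 = fun x => A x + B x + C x := by
    ext x; simp only [mixture]; generalize A x = a, B x = b, C x = c; revert a b c; decide
  rw [isBent2_majority_iff]
  simp only [ZMod.forall_two, h00, h01, h10, h11, and_assoc]

theorem stmt6 {n : ℕ} (hn : Even n) (hp : 0 < n)
    (A B C : (Fin n → ZMod 2) → ZMod 2) :
    IsBent2 (fun x x1 x2 => A x * B x + A x * C x + B x * C x + x1 * x2 + (A x + B x) * x1 + (A x + C x) * x2) ↔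
      (IsBent A ∧ IsBent B ∧ IsBent C ∧ IsBent (fun x => A x + B x + C x)) :=
  stmt6_general A B C
end

section
/- (Rothaus' construction, sufficiency.) Let n be even and A, B, C : F_2^n → F_2 bent functions such that A⊕B⊕C is also bent. Then f(x, x_{n+1}, x_{n+2}) = AB ⊕ AC ⊕ BC ⊕ x_{n+1}x_{n+2} ⊕ (A⊕B)x_{n+1} ⊕ (A⊕C)x_{n+2} (with A, B, C evaluated at x) is a bent function on F_2^{n+2}. -/
/-!
For fixed `x`, summing the sign of Rothaus' function plus `u₁x₁ + u₂x₂` over `(x₁, x₂) ∈ F_2²`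
gives `±2` times the sign of `A x`, `B x`, `C x` or `(A ⊕ B ⊕ C) x`, the choice and the sign
depending only on `(u₁, u₂)`. So every Walsh coefficient of `f` is `±2` times a Walsh coefficient
of one of the bent functions `A`, `B`, `C`, `A ⊕ B ⊕ C`, and has absolute value `2 · 2^(n/2)`.
-/

open Finset

def rothaus {n : ℕ} (A B C : (Fin n → ZMod 2) → ZMod 2) :
    (Fin n → ZMod 2) → ZMod 2 → ZMod 2 → ZMod 2 :=
  fun x x1 x2 => A x * B x + A x * C x + B x * C x + x1 * x2 + (A x + B x) * x1 + (A x + C x) * x2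

/-- Equal to `A`, `C`, `B`, `A + B + C` for `(u1, u2) = (0, 0), (1, 0), (0, 1), (1, 1)`. -/
def rothausComponent {n : ℕ} (A B C : (Fin n → ZMod 2) → ZMod 2) (u1 u2 : ZMod 2) :
    (Fin n → ZMod 2) → ZMod 2 :=
  fun x => A x + u1 * (A x + C x) + u2 * (A x + B x)

lemma sum_sum_neg_one_pow_rothaus (a b c d u1 u2 : ZMod 2) :
    ∑ x1 : ZMod 2, ∑ x2 : ZMod 2,
      (-1 : ℤ) ^ (a * b + a * c + b * c + x1 * x2 + (a + b) * x1 + (a + c) * x2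
        + d + u1 * x1 + u2 * x2).val
      = 2 * (-1) ^ (u1 * u2).val * (-1) ^ (a + u1 * (a + c) + u2 * (a + b) + d).val := by
  revert a b c d u1 u2; decide

lemma walsh2_rothaus {n : ℕ} (A B C : (Fin n → ZMod 2) → ZMod 2)
    (u : Fin n → ZMod 2) (u1 u2 : ZMod 2) :
    walsh2 (rothaus A B C) u u1 u2
      = 2 * (-1) ^ (u1 * u2).val * walsh (rothausComponent A B C u1 u2) u := by
  rw [walsh, mul_sum]
  exact sum_congr rfl fun x _ => sum_sum_neg_one_pow_rothaus _ _ _ _ u1 u2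

lemma isBent_rothausComponent {n : ℕ} {A B C : (Fin n → ZMod 2) → ZMod 2}
    (hA : IsBent A) (hB : IsBent B) (hC : IsBent C)
    (hABC : IsBent (fun x => A x + B x + C x)) (u1 u2 : ZMod 2) :
    IsBent (rothausComponent A B C u1 u2) := by
  have three_add : ∀ a b c : ZMod 2, a + (a + c) + (a + b) = a + b + c := by decide
  obtain rfl | rfl : u1 = 0 ∨ u1 = 1 := by revert u1; decide
  all_goals obtain rfl | rfl : u2 = 0 ∨ u2 = 1 := by revert u2; decide
  · convert hA using 1; funext x; simp [rothausComponent]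
  · convert hB using 1; funext x; simp [rothausComponent, ← add_assoc, CharTwo.add_self_eq_zero]
  · convert hC using 1; funext x; simp [rothausComponent, ← add_assoc, CharTwo.add_self_eq_zero]
  · convert hABC using 1; funext x; simpa [rothausComponent] using three_add (A x) (B x) (C x)

theorem stmt7_general {n : ℕ}
    (A B C : (Fin n → ZMod 2) → ZMod 2)
    (hA : IsBent A) (hB : IsBent B) (hC : IsBent C)
    (hABC : IsBent (fun x => A x + B x + C x)) :
    IsBent2 (fun x x1 x2 => A x * B x + A x * C x + B x * C x + x1 * x2 + (A x + B x) * x1 + (A x + C x) * x2) := by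
  intro u u1 u2
  change |walsh2 (rothaus A B C) u u1 u2| = _
  rw [walsh2_rothaus, abs_mul, abs_mul, abs_neg_one_pow,
    isBent_rothausComponent hA hB hC hABC, pow_succ]
  norm_num [mul_comm]

theorem stmt7 {n : ℕ} (hn : Even n)
    (A B C : (Fin n → ZMod 2) → ZMod 2)
    (hA : IsBent A) (hB : IsBent B) (hC : IsBent C)
    (hABC : IsBent (fun x => A x + B x + C x)) :
    IsBent2 (fun x x1 x2 => A x * B x + A x * C x + B x * C x + x1 * x2 + (A x + B x) * x1 + (A x + C x) * x2) :=
  stmt7_general A B C hA hB hC hABC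
end

section
/- (Hodžić et al.'s construction.) Let n be even and A, B, C : F_2^n → F_2 bent functions such that A⊕B⊕C is also bent. Then g : F_2^{n+4} → F_2 defined by g(x, x_{n+1}, x_{n+2}, x_{n+3}, x_{n+4}) = B(x)(x_{n+1}⊕x_{n+2}) ⊕ A(x)(1⊕x_{n+1}⊕x_{n+3}) ⊕ (C(x)⊕x_{n+1})(x_{n+2}⊕x_{n+3}) ⊕ (x_{n+1}⊕x_{n+2})x_{n+4} is bent. -/
open Finset

/-!
Summing out the four extra variables, the exponential sum over `x₁, …, x₄` at a fixed `x` equals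
`±4 (-1)^(A x (1 + e) + B x d + C x (d + e) + u·x)` with `d = u₄`, `e = u₁ + u₂ + u₃ + u₄` and a sign
depending only on `u₁, …, u₄`. Hence `W_g(u, u₁, …, u₄) = ±4 W_f(u)` for `f` one of `A`, `B`, `C`,
`A ⊕ B ⊕ C` (according to `d` and `e`), all of which are bent.
-/

def hodzicFun {n : ℕ} (A B C : (Fin n → ZMod 2) → ZMod 2) (x : Fin n → ZMod 2)
    (x1 x2 x3 x4 : ZMod 2) : ZMod 2 :=
  B x * (x1 + x2) + A x * (1 + x1 + x3) + (C x + x1) * (x2 + x3) + (x1 + x2) * x4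

def selectFun {n : ℕ} (A B C : (Fin n → ZMod 2) → ZMod 2) (d e : ZMod 2)
    (x : Fin n → ZMod 2) : ZMod 2 :=
  A x * (1 + e) + B x * d + C x * (d + e)

lemma sum_four_vars_hodzic (u1 u2 u3 u4 a b c s : ZMod 2) :
    ∑ x1 : ZMod 2, ∑ x2 : ZMod 2, ∑ x3 : ZMod 2, ∑ x4 : ZMod 2,
      (-1 : ℤ) ^ ((b * (x1 + x2) + a * (1 + x1 + x3) + (c + x1) * (x2 + x3) + (x1 + x2) * x4
        + s + u1 * x1 + u2 * x2 + u3 * x3 + u4 * x4).val)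
    = (-1 : ℤ) ^ ((u2 * u4 + (1 + u4 + u1 + u2) * u3).val) * 4 *
      (-1 : ℤ) ^ ((a * (1 + (u1 + u2 + u3 + u4)) + b * u4
        + c * (u4 + (u1 + u2 + u3 + u4)) + s).val) := by
  revert u1 u2 u3 u4 a b c s
  decide

lemma walsh4_hodzicFun {n : ℕ} (A B C : (Fin n → ZMod 2) → ZMod 2)
    (u : Fin n → ZMod 2) (u1 u2 u3 u4 : ZMod 2) :
    walsh4 (hodzicFun A B C) u u1 u2 u3 u4
      = (-1 : ℤ) ^ ((u2 * u4 + (1 + u4 + u1 + u2) * u3).val) * 4 *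
        walsh (selectFun A B C u4 (u1 + u2 + u3 + u4)) u := by
  rw [walsh, Finset.mul_sum]
  exact Finset.sum_congr rfl fun x _ =>
    sum_four_vars_hodzic u1 u2 u3 u4 (A x) (B x) (C x) (∑ i, u i * x i)

lemma isBent_selectFun {n : ℕ} {A B C : (Fin n → ZMod 2) → ZMod 2}
    (hA : IsBent A) (hB : IsBent B) (hC : IsBent C)
    (hABC : IsBent (fun x => A x + B x + C x)) (d e : ZMod 2) :
    IsBent (selectFun A B C d e) := by
  obtain rfl | rfl : d = 0 ∨ d = 1 := by revert d; decide
  all_goals obtain rfl | rfl : e = 0 ∨ e = 1 := by revert e; decide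
  · convert hA using 1; funext x; simp [selectFun]
  · convert hC using 1; funext x; simp [selectFun, CharTwo.add_self_eq_zero]
  · convert hABC using 1; funext x; simp [selectFun]
  · convert hB using 1; funext x; simp [selectFun, CharTwo.add_self_eq_zero]

theorem stmt12_general {n : ℕ}
    (A B C : (Fin n → ZMod 2) → ZMod 2)
    (hA : IsBent A) (hB : IsBent B) (hC : IsBent C)
    (hABC : IsBent (fun x => A x + B x + C x)) :
    IsBent4 (fun x x1 x2 x3 x4 => B x * (x1 + x2) + A x * (1 + x1 + x3) + (C x + x1) * (x2 + x3) + (x1 + x2) * x4) := by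
  intro u u1 u2 u3 u4
  change |walsh4 (hodzicFun A B C) u u1 u2 u3 u4| = _
  rw [walsh4_hodzicFun, abs_mul, abs_mul, abs_pow, abs_neg,
    abs_one, one_pow, one_mul, isBent_selectFun hA hB hC hABC _ _ u]
  ring

theorem stmt12 {n : ℕ} (hn : Even n)
    (A B C : (Fin n → ZMod 2) → ZMod 2)
    (hA : IsBent A) (hB : IsBent B) (hC : IsBent C)
    (hABC : IsBent (fun x => A x + B x + C x)) :
    IsBent4 (fun x x1 x2 x3 x4 => B x * (x1 + x2) + A x * (1 + x1 + x3) + (C x + x1) * (x2 + x3) + (x1 + x2) * x4) :=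
  stmt12_general A B C hA hB hC hABC
end

section
/- Let F : F_2^{n} → F_2 be expressed as a concatenation over the two extra variables: F(x, y_1, y_2) equals D(x) if (y_1,y_2)=(0,0) and equals E(x), E(x), E(x)⊕1 respectively on the other three cofaces, i.e., F(x,y_1,y_2) = D(x) ⊕ y_1y_2 ⊕ (y_1 ⊕ y_2 ⊕ y_1y_2)(D(x)⊕E(x)). Then F is bent on F_2^{n+2} (n even) if and only if D = E and D is bent. -/
/-! Splitting the sum over `(y₁, y₂)` gives `W_F(u, u₁, u₂) = W_D(u) + c(u₁, u₂) W_E(u)` with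
`c = 1` except `c(1, 1) = -3`. If `D = E` is bent, `|W_F| = 2 · 2^(n/2)` everywhere. Conversely,
comparing `(u₁, u₂) = (0, 0)` with `(1, 1)` gives `W_E(u) (W_D(u) - W_E(u)) = 0`, so at each `u`
either `W_E(u) = 0` or `W_D(u) = W_E(u)` and `|W_E(u)| = 2^(n/2)`. Parseval's identity leaves no
room for zeros, hence `W_D = W_E` with `E` bent, and Walsh inversion gives `D = E`. -/

open Finset

def chi (a : ZMod 2) : ℤ := (-1) ^ a.val

lemma chi_add : ∀ a b : ZMod 2, chi (a + b) = chi a * chi b := by decide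

lemma chi_mul_self : ∀ a : ZMod 2, chi a * chi a = 1 := by decide

lemma chi_injective : Function.Injective chi := by decide

lemma chi_sum {ι : Type*} (s : Finset ι) (f : ι → ZMod 2) :
    chi (∑ i ∈ s, f i) = ∏ i ∈ s, chi (f i) := by
  induction s using Finset.cons_induction with
  | empty => rfl
  | cons a s h ih => rw [Finset.sum_cons, Finset.prod_cons, chi_add, ih]

lemma sum_chi_mul (c : ZMod 2) : ∑ a : ZMod 2, chi (a * c) = if c = 0 then 2 else 0 := by
  revert c; decide

lemma sum_chi_dotProduct {n : ℕ} (z : Fin n → ZMod 2) :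
    ∑ u : Fin n → ZMod 2, chi (∑ i, u i * z i) = if z = 0 then 2 ^ n else 0 := by
  calc ∑ u : Fin n → ZMod 2, chi (∑ i, u i * z i)
      = ∏ i, ∑ a : ZMod 2, chi (a * z i) := by
        simp only [chi_sum, Fintype.prod_sum]
    _ = if z = 0 then 2 ^ n else 0 := by
        simp only [sum_chi_mul, Fintype.prod_ite_zero, funext_iff, Pi.zero_apply,
          Finset.prod_const, Finset.card_univ, Fintype.card_fin]

lemma walsh_eq_sum_chi_mul {n : ℕ} (g : (Fin n → ZMod 2) → ZMod 2) (u : Fin n → ZMod 2) :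
    walsh g u = ∑ x, chi (g x) * chi (∑ i, u i * x i) := by
  simp only [walsh, ← chi_add]; rfl

lemma sum_walsh_mul_chi {n : ℕ} (g : (Fin n → ZMod 2) → ZMod 2) (x : Fin n → ZMod 2) :
    ∑ u, walsh g u * chi (∑ i, u i * x i) = 2 ^ n * chi (g x) := by
  have hdot (u y : Fin n → ZMod 2) :
      chi (∑ i, u i * y i) * chi (∑ i, u i * x i) = chi (∑ i, u i * (y + x) i) := by
    simp only [← chi_add, ← Finset.sum_add_distrib, Pi.add_apply, mul_add]
  have hzero (y : Fin n → ZMod 2) : y + x = 0 ↔ y = x := by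
    rw [← ZModModule.sub_eq_add, sub_eq_zero]
  calc ∑ u, walsh g u * chi (∑ i, u i * x i)
      = ∑ y, chi (g y) * ∑ u : Fin n → ZMod 2, chi (∑ i, u i * (y + x) i) := by
        simp only [walsh_eq_sum_chi_mul, Finset.sum_mul, Finset.mul_sum, mul_assoc, hdot]
        exact Finset.sum_comm
    _ = 2 ^ n * chi (g x) := by
        simp only [sum_chi_dotProduct, hzero, mul_ite, mul_zero, Finset.sum_ite_eq',
          Finset.mem_univ, if_true, mul_comm]

lemma sum_walsh_sq {n : ℕ} (g : (Fin n → ZMod 2) → ZMod 2) :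
    ∑ u, walsh g u ^ 2 = 2 ^ n * 2 ^ n := by
  have hexpand (u : Fin n → ZMod 2) : walsh g u ^ 2 =
      ∑ x, chi (g x) * (walsh g u * chi (∑ i, u i * x i)) := by
    rw [sq]
    conv_lhs => arg 2; rw [walsh_eq_sum_chi_mul]
    rw [Finset.mul_sum]
    exact Finset.sum_congr rfl fun x _ => by ring
  calc ∑ u, walsh g u ^ 2
      = ∑ x, chi (g x) * ∑ u, walsh g u * chi (∑ i, u i * x i) := by
        simp only [hexpand, Finset.mul_sum]
        exact Finset.sum_comm
    _ = ∑ _x : Fin n → ZMod 2, 2 ^ n := by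
        simp only [sum_walsh_mul_chi, mul_left_comm _ (2 ^ n : ℤ), chi_mul_self, mul_one]
    _ = 2 ^ n * 2 ^ n := by simp

lemma walsh_injective {n : ℕ} : Function.Injective (walsh (n := n)) := by
  intro f g hfg
  funext x
  apply chi_injective
  have h := sum_walsh_mul_chi f x
  rw [hfg, sum_walsh_mul_chi] at h
  exact (mul_left_cancel₀ (by positivity) h).symm

lemma sq_two_pow_half {n : ℕ} (hn : Even n) : ((2 : ℤ) ^ (n / 2)) ^ 2 = 2 ^ n := by
  rw [← pow_mul, Nat.div_mul_cancel hn.two_dvd]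

lemma isBent_iff_forall_walsh_sq {n : ℕ} (hn : Even n) (g : (Fin n → ZMod 2) → ZMod 2) :
    IsBent g ↔ ∀ u, walsh g u ^ 2 = 2 ^ n := by
  refine forall_congr' fun u => ?_
  rw [← sq_two_pow_half hn, ← sq_abs, pow_left_inj₀ (abs_nonneg _) (by positivity) two_ne_zero]

lemma forall_walsh_sq_eq_of_forall_le {n : ℕ} (g : (Fin n → ZMod 2) → ZMod 2)
    (h : ∀ u, walsh g u ^ 2 ≤ 2 ^ n) : ∀ u, walsh g u ^ 2 = 2 ^ n := by
  have hsum : ∑ u, walsh g u ^ 2 = ∑ _u : Fin n → ZMod 2, (2 : ℤ) ^ n := by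
    simp [sum_walsh_sq]
  simpa using (Finset.sum_eq_sum_iff_of_le fun u _ => h u).mp hsum

lemma eq_zero_or_eq_of_abs_add_eq_abs_sub_three_mul {a b : ℤ} (h : |a + b| = |a - 3 * b|) :
    b = 0 ∨ a = b := by
  have hsq := (sq_eq_sq_iff_abs_eq_abs _ _).mpr h
  have h8 : (8 : ℤ) * (b * (a - b)) = 0 := by linear_combination hsq
  simpa [sub_eq_zero] using h8

/-- `F(x, y₁, y₂)` restricts to `D, E, E, E + 1` on the four cosets `(y₁, y₂) = 00, 10, 01, 11`. -/
def cofaceConcat {n : ℕ} (D E : (Fin n → ZMod 2) → ZMod 2) :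
    (Fin n → ZMod 2) → ZMod 2 → ZMod 2 → ZMod 2 :=
  fun x y1 y2 => D x + y1 * y2 + (y1 + y2 + y1 * y2) * (D x + E x)

/-- `(-1)^u₁ + (-1)^u₂ - (-1)^(u₁+u₂)`, the total sign with which `W_E` enters `W_F`. -/
def cofaceWeight (u1 u2 : ZMod 2) : ℤ := if u1 = 1 ∧ u2 = 1 then -3 else 1

lemma abs_one_add_cofaceWeight : ∀ u1 u2 : ZMod 2, |1 + cofaceWeight u1 u2| = 2 := by decide

lemma sum_sum_chi_cofaceConcat : ∀ a b s u1 u2 : ZMod 2,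
    ∑ y1 : ZMod 2, ∑ y2 : ZMod 2,
      (-1 : ℤ) ^ (a + y1 * y2 + (y1 + y2 + y1 * y2) * (a + b) + s + u1 * y1 + u2 * y2).val
      = chi (a + s) + cofaceWeight u1 u2 * chi (b + s) := by decide

lemma walsh2_cofaceConcat {n : ℕ} (D E : (Fin n → ZMod 2) → ZMod 2) (u : Fin n → ZMod 2)
    (u1 u2 : ZMod 2) :
    walsh2 (cofaceConcat D E) u u1 u2 = walsh D u + cofaceWeight u1 u2 * walsh E u := by
  simp only [walsh2, cofaceConcat, sum_sum_chi_cofaceConcat, Finset.sum_add_distrib,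
    ← Finset.mul_sum]
  rfl

lemma isBent2_cofaceConcat_self {n : ℕ} {D : (Fin n → ZMod 2) → ZMod 2} (hD : IsBent D) :
    IsBent2 (cofaceConcat D D) := by
  intro u u1 u2
  rw [walsh2_cofaceConcat, ← one_add_mul, abs_mul, abs_one_add_cofaceWeight, hD u, pow_succ,
    mul_comm]

lemma walsh_eq_and_walsh_sq_of_isBent2_cofaceConcat {n : ℕ} (hn : Even n)
    {D E : (Fin n → ZMod 2) → ZMod 2} (hF : IsBent2 (cofaceConcat D E)) (u : Fin n → ZMod 2) :
    walsh D u = walsh E u ∧ walsh E u ^ 2 = 2 ^ n := by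
  have hsum (u) : |walsh D u + walsh E u| = 2 ^ (n / 2 + 1) := by
    simpa [walsh2_cofaceConcat, cofaceWeight] using hF u 0 0
  have hdiff (u) : |walsh D u - 3 * walsh E u| = 2 ^ (n / 2 + 1) := by
    rw [← hF u 1 1, walsh2_cofaceConcat, show cofaceWeight 1 1 = -3 from rfl]
    ring_nf
  have hcase (u) : walsh E u = 0 ∨ walsh D u = walsh E u :=
    eq_zero_or_eq_of_abs_add_eq_abs_sub_three_mul ((hsum u).trans (hdiff u).symm)
  have hle (u) : walsh E u ^ 2 ≤ 2 ^ n := by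
    rcases hcase u with h0 | hDE
    · rw [h0]; positivity
    · have h := hsum u
      rw [hDE, ← two_mul, abs_mul, abs_two, pow_succ, mul_comm _ 2] at h
      rw [← sq_abs, mul_left_cancel₀ two_ne_zero h, sq_two_pow_half hn]
  have hsq := forall_walsh_sq_eq_of_forall_le E hle u
  refine ⟨(hcase u).resolve_left fun h0 => ?_, hsq⟩
  rw [h0] at hsq
  exact absurd hsq.symm (by positivity)

theorem stmt18 {n : ℕ} (hn : Even n)
    (D E : (Fin n → ZMod 2) → ZMod 2) :
    IsBent2 (fun x y1 y2 => D x + y1 * y2 + (y1 + y2 + y1 * y2) * (D x + E x)) ↔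
      (D = E ∧ IsBent D) := by
  constructor
  · intro hF
    have h := walsh_eq_and_walsh_sq_of_isBent2_cofaceConcat hn hF
    obtain rfl : D = E := walsh_injective (funext fun u => (h u).1)
    exact ⟨rfl, (isBent_iff_forall_walsh_sq hn D).mpr fun u => (h u).2⟩
  · rintro ⟨rfl, hD⟩
    exact isBent2_cofaceConcat_self hD
end
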